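/- Let E be a normed real vector space, n a natural number, and f : E → (Fin n → ℝ) differentiable at θ₀ with the n coordinates f(θ₀)(0), …, f(θ₀)(n−1) pairwise distinct. Then there exist a permutation σ of Fin n and a neighborhood U of θ₀ such that for every θ ∈ U, the coordinate vector θ ↦ (f(θ)(σ(0)), …, f(θ)(σ(n−1))) is strictly increasing and equals the increasing rearrangement of the coordinates of f(θ); consequently the map sending θ to the increasing rearrangement of the coordinates of f(θ) is differentiable at θ₀. -/

import Mathlib

/-!
Sorting by `σ := Tuple.sort (f θ₀)` makes `f θ₀ ∘ σ` strictly increasing, because the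
coordinates of `f θ₀` are distinct. Finitely many strict inequalities between continuous
functions persist near `θ₀`, so `f θ ∘ σ` stays strictly increasing there, and by uniqueness
of the monotone rearrangement it is the sorted tuple of `f θ`. Near `θ₀` the sorted tuple is
thus a fixed coordinate permutation of `f`, hence differentiable at `θ₀`.
-/

open Filter Topology

theorem Tuple.strictMono_comp_sort {n : ℕ} {α : Type*} [LinearOrder α] {g : Fin n → α}
    (hg : Function.Injective g) : StrictMono (g ∘ Tuple.sort g) :=
  (Tuple.monotone_sort g).strictMono_of_injective (hg.comp (Tuple.sort g).injective)

theorem Tuple.comp_sort_eq_of_strictMono {n : ℕ} {α : Type*} [LinearOrder α]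
    {g : Fin n → α} {σ : Equiv.Perm (Fin n)} (h : StrictMono (g ∘ σ)) :
    g ∘ Tuple.sort g = g ∘ σ :=
  (Tuple.comp_sort_eq_comp_iff_monotone.mpr h.monotone).symm

theorem ContinuousAt.eventually_strictMono {X ι α : Type*} [TopologicalSpace X]
    [Preorder ι] [Finite ι] [LinearOrder α] [TopologicalSpace α] [OrderClosedTopology α]
    {F : X → ι → α} {x₀ : X} (hF : ContinuousAt F x₀) (h : StrictMono (F x₀)) :
    ∀ᶠ x in 𝓝 x₀, StrictMono (F x) := by
  have hcoord (i : ι) : ContinuousAt (fun x => F x i) x₀ := continuousAt_pi.mp hF i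
  simp only [StrictMono, eventually_all]
  exact fun i j hij => (hcoord i).eventually_lt (hcoord j) (h hij)

/-- Let `E` be a normed real vector space, `n : ℕ`, and `f : E → (Fin n → ℝ)`
differentiable at `θ₀`, with the `n` coordinates of `f θ₀` pairwise distinct. Then there
exist a permutation `σ` of `Fin n` and a neighborhood `U` of `θ₀` such that for every
`θ ∈ U` the coordinate vector `i ↦ f θ (σ i)` is strictly increasing and equals the
increasing rearrangement of the coordinates of `f θ` (given by `Tuple.sort`);
consequently, the map sending `θ` to the increasing rearrangement of the coordinates of
`f θ` is differentiable at `θ₀`. -/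
theorem sorted_coordinates_differentiableAt {E : Type*} [NormedAddCommGroup E]
    [NormedSpace ℝ E] (n : ℕ) (f : E → Fin n → ℝ) (θ₀ : E)
    (hf : DifferentiableAt ℝ f θ₀) (hdist : Function.Injective (f θ₀)) :
    ∃ (σ : Equiv.Perm (Fin n)), ∃ U ∈ nhds θ₀,
      (∀ θ ∈ U, StrictMono (fun i => f θ (σ i)) ∧
        (fun i => f θ (σ i)) = fun i => f θ (Tuple.sort (f θ) i)) ∧
      DifferentiableAt ℝ (fun θ => fun i => f θ (Tuple.sort (f θ) i)) θ₀ := by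
  set σ := Tuple.sort (f θ₀)
  have hcont : ContinuousAt (fun θ i => f θ (σ i)) θ₀ :=
    continuousAt_pi.mpr fun i => continuousAt_pi.mp hf.continuousAt (σ i)
  have hmono : ∀ᶠ θ in 𝓝 θ₀, StrictMono (fun i => f θ (σ i)) :=
    hcont.eventually_strictMono (Tuple.strictMono_comp_sort hdist)
  have hsorted : ∀ᶠ θ in 𝓝 θ₀,
      (fun i => f θ (Tuple.sort (f θ) i)) = fun i => f θ (σ i) :=
    hmono.mono fun θ hθ => Tuple.comp_sort_eq_of_strictMono hθ
  have hdiff : DifferentiableAt ℝ (fun θ i => f θ (σ i)) θ₀ :=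
    differentiableAt_pi.mpr fun i => differentiableAt_pi.mp hf (σ i)
  refine ⟨σ, _, hmono.and hsorted, fun θ hθ => ⟨hθ.1, hθ.2.symm⟩, ?_⟩
  exact hdiff.congr_of_eventuallyEq hsorted
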